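/- Let k ∈ ℕ and let χ(y) ∈ ℤ[y] be a polynomial (playing the role of χ_{-y}(X) for a closed complex manifold X of complex dimension 2k). Define polynomials C_n(y) ∈ ℚ[y] by the identity ∑_{n≥0} C_n(y) q^n = exp( ∑_{n≥1} (q^n/n) · χ(y^n) / (1 - (y^k q)^n) ) in ℚ[[y,q]] (these are the orbifold genera χ_{-y}(X^n,S_n)). Then, in the ring ℚ((y))[[p]] of formal power series in p over the field of formal Laurent series in y, one has ∑_{n≥0} y^{-kn} C_n(y) p^n = exp( ∑_{m≥1} (y^{-km} χ(y^m)) · p^m / ( m (1 - p^m) ) ). (This proves the q = 0 specialization of the Dijkgraaf–Moore–Verlinde–Verlinde formula for elliptic genera of symmetric products, with χ(M,G;0,y) defined as y^{-dim M/2} χ_{-y}(M,G).) -/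

import Mathlib

/-!
Embed `ℚ[[y]]` into `ℚ((y))` and substitute `q ↦ y^{-k} p`. This ring homomorphism
`ℚ[[y]][[q]] → ℚ((y))[[p]]` multiplies the `q^n`-coefficient by `y^{-kn}`, so it sends
`∑ C_n(y) q^n` to `∑ y^{-kn} C_n(y) p^n` and commutes with `exp`, which is computed
coefficientwise. Since `y^k q ↦ p`, it sends the summand `(q^n/n) χ(y^n)/(1-(y^k q)^n)` to
`(y^{-kn} χ(y^n)) p^n/(n(1-p^n))`, and the identity defining the `C_n` maps to the claim.
-/

open PowerSeries Finset

/-- The exponential of a formal power series (with zero constant term) over a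
`ℚ`-algebra: `pexp f = ∑_{j≥0} f^j / j!`. -/
noncomputable def pexp {R : Type*} [CommRing R] [Algebra ℚ R] (f : PowerSeries R) :
    PowerSeries R :=
  PowerSeries.mk fun n =>
    ∑ j ∈ Finset.range (n + 1),
      algebraMap ℚ R (1 / j.factorial) * PowerSeries.coeff (R := R) n (f ^ j)

/-- The `n`-th summand `(q^n/n) · χ(y^n) / (1 - (y^k q)^n)` of the series defining the
`C_n`, an element of `ℚ[[y]][[q]]`. -/
noncomputable def defTerm (k : ℕ) (χ : Polynomial ℤ) (n : ℕ) : PowerSeries (PowerSeries ℚ) :=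
  PowerSeries.C (R := PowerSeries ℚ)
      ((n : ℚ)⁻¹ • Polynomial.aeval ((PowerSeries.X : PowerSeries ℚ) ^ n) χ) *
    PowerSeries.X ^ n *
    Ring.inverse (1 - (PowerSeries.C (R := PowerSeries ℚ) ((PowerSeries.X : PowerSeries ℚ) ^ k) *
      PowerSeries.X) ^ n)

/-- The variable `y` of `ℚ((y))`. -/
noncomputable def yL : LaurentSeries ℚ := ((PowerSeries.X : PowerSeries ℚ) : LaurentSeries ℚ)

/-- The `m`-th summand `(y^{-km} χ(y^m)) · p^m/(m(1-p^m))` of the series in the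
conclusion, an element of `(ℚ((y)))[[p]]`. -/
noncomputable def conclTerm (k : ℕ) (χ : Polynomial ℤ) (m : ℕ) :
    PowerSeries (LaurentSeries ℚ) :=
  PowerSeries.C (R := LaurentSeries ℚ)
      (algebraMap ℚ (LaurentSeries ℚ) ((m : ℚ)⁻¹) * yL ^ (-(k * m : ℤ)) *
        Polynomial.aeval (yL ^ m) χ) *
    PowerSeries.X ^ m * (1 - (PowerSeries.X : PowerSeries (LaurentSeries ℚ)) ^ m)⁻¹

open scoped PowerSeries

section pexp

variable {R S : Type*} [CommRing R] [CommRing S] [Algebra ℚ R] [Algebra ℚ S]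

theorem map_pexp (φ : R →+* S) (f : R⟦X⟧) : map φ (pexp f) = pexp (map φ f) := by
  ext N
  simp only [pexp, coeff_map, coeff_mk, map_sum, map_mul, RingHom.map_rat_algebraMap, ← map_pow]

theorem rescale_pexp (a : R) (f : R⟦X⟧) : rescale a (pexp f) = pexp (rescale a f) := by
  ext N
  simp only [pexp, coeff_rescale, coeff_mk, ← map_pow, Finset.mul_sum]
  exact Finset.sum_congr rfl fun _ _ => mul_left_comm _ _ _

end pexp

theorem rescale_C {R : Type*} [CommSemiring R] (a c : R) : rescale a (C c) = C c := by
  ext n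
  rcases n with _ | n <;> simp [coeff_rescale, coeff_C]

theorem map_ringInverse_eq_inv {R K : Type*} [CommRing R] [Field K] (φ : R →+* K⟦X⟧) {u : R}
    (hu : IsUnit u) : φ (Ring.inverse u) = (φ u)⁻¹ := by
  have hφu : constantCoeff (φ u) ≠ 0 := ((isUnit_iff_constantCoeff).mp (hu.map φ)).ne_zero
  rw [PowerSeries.eq_inv_iff_mul_eq_one hφu, ← map_mul, Ring.inverse_mul_cancel _ hu, map_one]

theorem yL_ne_zero : yL ≠ 0 :=
  (map_ne_zero_iff _ (HahnSeries.ofPowerSeries_injective (Γ := ℤ) (R := ℚ))).mpr X_ne_zero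

theorem ofPowerSeries_coe_polynomial (p : Polynomial ℚ) :
    HahnSeries.ofPowerSeries ℤ ℚ p = Polynomial.aeval yL p := by
  rw [← Polynomial.eval₂_C_X_eq_coe, Polynomial.hom_eval₂, Polynomial.aeval_def]
  congr 1

theorem ofPowerSeries_aeval (p : Polynomial ℤ) (a : ℚ⟦X⟧) :
    HahnSeries.ofPowerSeries ℤ ℚ (Polynomial.aeval a p) =
      Polynomial.aeval (HahnSeries.ofPowerSeries ℤ ℚ a) p := by
  rw [Polynomial.aeval_def, Polynomial.aeval_def, Polynomial.hom_eval₂]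
  congr 1

theorem ofPowerSeries_X_eq_yL : HahnSeries.ofPowerSeries ℤ ℚ X = yL := rfl

theorem zpow_neg_natCast_pow {G : Type*} [DivisionMonoid G] (a : G) (k n : ℕ) :
    (a ^ (-(k : ℤ))) ^ n = a ^ (-(k * n : ℤ)) := by
  rw [← zpow_natCast, ← zpow_mul, neg_mul]

noncomputable def qSubst (k : ℕ) : (ℚ⟦X⟧)⟦X⟧ →+* (LaurentSeries ℚ)⟦X⟧ :=
  (rescale (yL ^ (-(k : ℤ)))).comp (map (HahnSeries.ofPowerSeries ℤ ℚ))

theorem qSubst_C (k : ℕ) (a : ℚ⟦X⟧) : qSubst k (C a) = C (HahnSeries.ofPowerSeries ℤ ℚ a) := by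
  simp only [qSubst, RingHom.comp_apply, map_C, rescale_C]

theorem qSubst_X (k : ℕ) : qSubst k X = C (yL ^ (-(k : ℤ))) * X := by
  simp only [qSubst, RingHom.comp_apply, map_X, rescale_X]

theorem qSubst_C_X_pow_mul_X (k : ℕ) : qSubst k (C (X ^ k) * X) = X := by
  have hyk : yL ^ k * yL ^ (-(k : ℤ)) = 1 := by
    rw [← zpow_natCast, ← zpow_add₀ yL_ne_zero, add_neg_cancel, zpow_zero]
  rw [map_mul, qSubst_C, qSubst_X, map_pow, ofPowerSeries_X_eq_yL, ← mul_assoc, ← map_mul, hyk,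
    map_one, one_mul]

theorem coeff_qSubst (k : ℕ) (f : (ℚ⟦X⟧)⟦X⟧) (N : ℕ) :
    coeff N (qSubst k f) = yL ^ (-(k * N : ℤ)) * HahnSeries.ofPowerSeries ℤ ℚ (coeff N f) := by
  rw [qSubst, RingHom.comp_apply, coeff_rescale, coeff_map, zpow_neg_natCast_pow]

theorem qSubst_defTerm (k : ℕ) (χ : Polynomial ℤ) {n : ℕ} (hn : n ≠ 0) :
    qSubst k (defTerm k χ n) = conclTerm k χ n := by
  have hunit : IsUnit ((1 : (ℚ⟦X⟧)⟦X⟧) - (C (X ^ k) * X) ^ n) := by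
    simp [isUnit_iff_constantCoeff, zero_pow hn]
  rw [defTerm, conclTerm, map_mul, map_mul, map_ringInverse_eq_inv _ hunit, map_sub, map_one,
    map_pow _ (C (X ^ k) * X), qSubst_C_X_pow_mul_X, map_pow, qSubst_X, qSubst_C, mul_pow,
    ← map_pow, ← mul_assoc, ← map_mul]
  congr 3
  rw [Algebra.smul_def, map_mul, RingHom.map_rat_algebraMap, ofPowerSeries_aeval, map_pow,
    ofPowerSeries_X_eq_yL, zpow_neg_natCast_pow]
  ring

theorem qSubst_pexp (k : ℕ) (f : (ℚ⟦X⟧)⟦X⟧) : qSubst k (pexp f) = pexp (qSubst k f) := by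
  rw [qSubst, RingHom.comp_apply, map_pexp, rescale_pexp, RingHom.comp_apply]

theorem qSubst_mk_coeff_sum (k : ℕ) (s : ℕ → Finset ℕ) (T : ℕ → (ℚ⟦X⟧)⟦X⟧) :
    qSubst k (mk fun N => coeff N (∑ n ∈ s N, T n)) =
      mk fun N => coeff N (∑ n ∈ s N, qSubst k (T n)) := by
  ext N
  simp only [coeff_qSubst, coeff_mk, map_sum, Finset.mul_sum]

theorem qSubst_mk_coe (k : ℕ) (C : ℕ → Polynomial ℚ) :
    qSubst k (mk fun n => (C n : ℚ⟦X⟧)) =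
      mk fun n => yL ^ (-(k * n : ℤ)) * Polynomial.aeval yL (C n) := by
  ext n
  rw [coeff_qSubst, coeff_mk, coeff_mk, ofPowerSeries_coe_polynomial]

theorem dmvv_formula_q_zero_specialization (k : ℕ) (χ : Polynomial ℤ)
    (C : ℕ → Polynomial ℚ)
    (hC : (PowerSeries.mk fun n => ((C n : Polynomial ℚ) : PowerSeries ℚ)
        : PowerSeries (PowerSeries ℚ)) =
      pexp (PowerSeries.mk fun N =>
        PowerSeries.coeff (R := PowerSeries ℚ) N (∑ n ∈ Finset.Icc 1 N, defTerm k χ n))) :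
    (PowerSeries.mk fun n => yL ^ (-(k * n : ℤ)) * Polynomial.aeval yL (C n)
        : PowerSeries (LaurentSeries ℚ)) =
      pexp (PowerSeries.mk fun N =>
        PowerSeries.coeff (R := LaurentSeries ℚ) N (∑ m ∈ Finset.Icc 1 N, conclTerm k χ m)) := by
  rw [← qSubst_mk_coe, hC, qSubst_pexp, qSubst_mk_coeff_sum]
  congr! 5 with N n hn
  exact qSubst_defTerm k χ (Nat.one_le_iff_ne_zero.mp (Finset.mem_Icc.mp hn).1)
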